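/- arXiv:0805.0550 — 2 statements merged into one kernel-verified Lean document; each statement's English description precedes it below -/
import Mathlib

section
/- Well-posedness with interface unknowns and fine-flux/coarse-pressure matching: augment the one-dimensional composite finite volume scheme with additional interface unknowns p_{I+1/2}^{n,k} and p_{I+1/2}^{n}, interface fluxes u_{I+1/2}^{n,k} = (p_{I+1/2}^{n,k} − p_I^{n,k})/(x_{I+1/2} − x_I) and u_{I+1/2}^{n} = (p_{I+1}^{n} − p_{I+1/2}^{n})/(x_{I+1} − x_{I+1/2}), and interface conditions, for every n: u_{I+1/2}^{n,k} = u_{I+1/2}^{n} for all k and δt₂ p_{I+1/2}^{n} = Σ_{k=1}^{𝒦} δt₁ p_{I+1/2}^{n,k}. Then for every choice of sources f_j^{n,k}, f_j^{n} and initial values p_j^0, the resulting finite linear system has exactly one solution (p_j^{n,k} for j ≤ I, p_j^{n} for j > I, p_{I+1/2}^{n,k}, p_{I+1/2}^{n}). -/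
open Finset

/-- Cell center `x_j = (x_{j-1/2} + x_{j+1/2})/2`, where `xh j` denotes `x_{j+1/2}`
(so `xh 0 = x_{1/2}`, …, `xh J = x_{J+1/2}`). -/
noncomputable def xc (xh : ℕ → ℝ) (j : ℕ) : ℝ := (xh (j - 1) + xh j) / 2

/-- Cell width `h_j = x_{j+1/2} − x_{j−1/2}`. -/
noncomputable def hw (xh : ℕ → ℝ) (j : ℕ) : ℝ := xh j - xh (j - 1)

/-- The previous fine-time value `p_j^{n,k−1}`, with the conventions
`p_j^{n,0} = p_j^{n−1,𝒦}` and `p_j^{1,0} = p_j^0`. -/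
def prevF (K : ℕ) (p0 : ℕ → ℝ) (p1 : ℕ → ℕ → ℕ → ℝ) (n k j : ℕ) : ℝ :=
  if k = 1 then (if n = 1 then p0 j else p1 (n - 1) K j) else p1 n (k - 1) j

/-- The previous coarse-time value `p_j^{n−1}`, with the convention `p_j^0 = p_j^0`. -/
def prevC (p0 : ℕ → ℝ) (p2 : ℕ → ℕ → ℝ) (n j : ℕ) : ℝ :=
  if n = 1 then p0 j else p2 (n - 1) j

/-- Fine fluxes `u_{j+1/2}^{n,k}` for face indices `j = 0,…,I`:
`u_{1/2}^{n,k} = p_1^{n,k}/(x_1 − x_{1/2})`,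
`u_{j+1/2}^{n,k} = (p_{j+1}^{n,k} − p_j^{n,k})/(x_{j+1} − x_j)` for `1 ≤ j < I`, and the
interface flux `u_{I+1/2}^{n,k} = (p_{I+1/2}^{n,k} − p_I^{n,k})/(x_{I+1/2} − x_I)`,
where `q1 n k` denotes the interface unknown `p_{I+1/2}^{n,k}`. -/
noncomputable def uF (I : ℕ) (xh : ℕ → ℝ) (p1 : ℕ → ℕ → ℕ → ℝ) (q1 : ℕ → ℕ → ℝ)
    (n k j : ℕ) : ℝ :=
  if j = 0 then p1 n k 1 / (xc xh 1 - xh 0)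
  else if j < I then (p1 n k (j + 1) - p1 n k j) / (xc xh (j + 1) - xc xh j)
  else (q1 n k - p1 n k I) / (xh I - xc xh I)

/-- Coarse fluxes `u_{j+1/2}^{n}` for face indices `j = I,…,J`:
the interface flux `u_{I+1/2}^{n} = (p_{I+1}^{n} − p_{I+1/2}^{n})/(x_{I+1} − x_{I+1/2})`
(where `q2 n` denotes the interface unknown `p_{I+1/2}^{n}`),
`u_{j+1/2}^{n} = (p_{j+1}^{n} − p_j^{n})/(x_{j+1} − x_j)` for `I < j < J`, and
`u_{J+1/2}^{n} = −p_J^{n}/(x_{J+1/2} − x_J)`. -/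
noncomputable def uC (I J : ℕ) (xh : ℕ → ℝ) (p2 : ℕ → ℕ → ℝ) (q2 : ℕ → ℝ)
    (n j : ℕ) : ℝ :=
  if j = J then -(p2 n J) / (xh J - xc xh J)
  else if I < j then (p2 n (j + 1) - p2 n j) / (xc xh (j + 1) - xc xh j)
  else (p2 n (I + 1) - q2 n) / (xc xh (I + 1) - xh I)

/-- The interior scheme equations of the one-dimensional composite finite volume scheme:
`(h_j/δt₁)(p_j^{n,k} − p_j^{n,k−1}) − (u_{j+1/2}^{n,k} − u_{j−1/2}^{n,k}) = h_j f_j^{n,k}`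
for `j = 1,…,I`, `n = 1,…,N₂`, `k = 1,…,𝒦`, and
`(h_j/δt₂)(p_j^{n} − p_j^{n−1}) − (u_{j+1/2}^{n} − u_{j−1/2}^{n}) = h_j f_j^{n}`
for `j = I+1,…,J`, `n = 1,…,N₂`. -/
def SchemeEqs (J I K N2 : ℕ) (δt1 δt2 : ℝ) (xh : ℕ → ℝ)
    (p0 : ℕ → ℝ) (f1 : ℕ → ℕ → ℕ → ℝ) (f2 : ℕ → ℕ → ℝ)
    (p1 : ℕ → ℕ → ℕ → ℝ) (p2 : ℕ → ℕ → ℝ) (q1 : ℕ → ℕ → ℝ) (q2 : ℕ → ℝ) : Prop :=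
  (∀ n ∈ Icc 1 N2, ∀ k ∈ Icc 1 K, ∀ j ∈ Icc 1 I,
      (hw xh j / δt1) * (p1 n k j - prevF K p0 p1 n k j)
        - (uF I xh p1 q1 n k j - uF I xh p1 q1 n k (j - 1)) = hw xh j * f1 n k j)
  ∧ (∀ n ∈ Icc 1 N2, ∀ j ∈ Icc (I + 1) J,
      (hw xh j / δt2) * (p2 n j - prevC p0 p2 n j)
        - (uC I J xh p2 q2 n j - uC I J xh p2 q2 n (j - 1)) = hw xh j * f2 n j)

/-- Interface conditions with interface unknowns and fine-flux/coarse-pressure matching: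
`u_{I+1/2}^{n,k} = u_{I+1/2}^{n}` for all `k` and
`δt₂ p_{I+1/2}^{n} = ∑_{k=1}^{𝒦} δt₁ p_{I+1/2}^{n,k}`. -/
def InterfaceFineFlux (J I K N2 : ℕ) (δt1 δt2 : ℝ) (xh : ℕ → ℝ)
    (p1 : ℕ → ℕ → ℕ → ℝ) (p2 : ℕ → ℕ → ℝ) (q1 : ℕ → ℕ → ℝ) (q2 : ℕ → ℝ) : Prop :=
  ∀ n ∈ Icc 1 N2,
    (∀ k ∈ Icc 1 K, uF I xh p1 q1 n k I = uC I J xh p2 q2 n I)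
    ∧ δt2 * q2 n = ∑ k ∈ Icc 1 K, δt1 * q1 n k

/-!
The whole scheme is a square linear system, so it suffices to show that with zero data every
solution vanishes: existence then follows because an injective endomorphism of a
finite-dimensional space is surjective. The homogeneous problem is handled one coarse step at a
time. Each fine flux is the difference quotient of the fine pressures along the nodes
`x_{1/2}, x_1, …, x_I, x_{I+1/2}`, carrying the Dirichlet value `0` on the left and the interface
unknown on the right, and likewise on the coarse side. Multiplying the fine equations by
`δt₁ p^{n,k}`, the coarse ones by `δt₂ p^n` and summing by parts, the interface terms cancel
precisely because of the flux matching and `δt₂ p_{I+1/2}^n = ∑_k δt₁ p_{I+1/2}^{n,k}`. What is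
left says that a nonnegative backward-Euler energy plus weighted sums of the squared fluxes
vanishes, so all fluxes vanish and the boundary values force every pressure to be `0`.
-/

theorem sum_Icc_sub_pred_mul {a b : ℕ} (hab : a ≤ b) (u p : ℕ → ℝ) :
    ∑ j ∈ Icc (a + 1) b, (u j - u (j - 1)) * p j
      = u b * p (b + 1) - u a * p a - ∑ j ∈ Icc a b, u j * (p (j + 1) - p j) := by
  induction b, hab using Nat.le_induction with
  | base =>
    simp only [Icc_eq_empty_of_lt (Nat.lt_succ_self a), sum_empty, Icc_self, sum_singleton]
    ring
  | succ b hab ih =>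
    rw [sum_Icc_succ_top (by omega), sum_Icc_succ_top (by omega), ih, Nat.add_sub_cancel]
    ring

theorem sq_sub_sq_le_two_mul_sum_Icc_sub_pred_mul (a : ℕ → ℝ) (K : ℕ) :
    a K ^ 2 - a 0 ^ 2 ≤ 2 * ∑ k ∈ Icc 1 K, (a k - a (k - 1)) * a k := by
  induction K with
  | zero => simp
  | succ K ih =>
    rw [sum_Icc_succ_top (by omega), Nat.add_sub_cancel]
    nlinarith [sq_nonneg (a (K + 1) - a K)]

section FluxChain

variable {a b : ℕ} {x p u : ℕ → ℝ}

theorem sum_Icc_flux_sub_mul (hab : a ≤ b) (hx : ∀ j ∈ Icc a b, x j ≠ x (j + 1))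
    (hu : ∀ j ∈ Icc a b, u j = (p (j + 1) - p j) / (x (j + 1) - x j)) :
    ∑ j ∈ Icc (a + 1) b, (u j - u (j - 1)) * p j
      = u b * p (b + 1) - u a * p a - ∑ j ∈ Icc a b, (x (j + 1) - x j) * u j ^ 2 := by
  rw [sum_Icc_sub_pred_mul hab]
  congr 1
  refine sum_congr rfl fun j hj => ?_
  have hd : x (j + 1) - x j ≠ 0 := sub_ne_zero.mpr (hx j hj).symm
  rw [hu j hj]
  field_simp

theorem eq_of_sum_mul_sq_eq_zero (hx : ∀ j ∈ Icc a b, x j < x (j + 1))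
    (hu : ∀ j ∈ Icc a b, u j = (p (j + 1) - p j) / (x (j + 1) - x j))
    (h0 : ∑ j ∈ Icc a b, (x (j + 1) - x j) * u j ^ 2 = 0) :
    ∀ j ∈ Icc a (b + 1), p j = p a := by
  have hstep : ∀ j ∈ Icc a b, p (j + 1) = p j := by
    intro j hj
    have hd : 0 < x (j + 1) - x j := sub_pos.mpr (hx j hj)
    have hterm := (sum_eq_zero_iff_of_nonneg fun i hi =>
      mul_nonneg (sub_pos.mpr (hx i hi)).le (sq_nonneg (u i))).mp h0 j hj
    have : u j = 0 := by simpa [hd.ne'] using hterm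
    rw [hu j hj, div_eq_zero_iff] at this
    exact sub_eq_zero.mp (this.resolve_right hd.ne')
  intro j hj
  obtain ⟨haj, hjb⟩ := mem_Icc.mp hj
  induction j, haj using Nat.le_induction with
  | base => rfl
  | succ j haj ih =>
    rw [hstep j (mem_Icc.mpr ⟨haj, by omega⟩), ih (mem_Icc.mpr ⟨haj, by omega⟩) (by omega)]

end FluxChain

def withBoundary (a b : ℕ) (l : ℝ) (v : ℕ → ℝ) (r : ℝ) (j : ℕ) : ℝ :=
  if j ≤ a then l else if j ≤ b then v j else r

/-- The points `x_{1/2}, x_1, …, x_I, x_{I+1/2}`, at indices `0, …, I + 1`. -/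
noncomputable def fineNodes (I : ℕ) (xh : ℕ → ℝ) : ℕ → ℝ :=
  withBoundary 0 I (xh 0) (xc xh) (xh I)

/-- The points `x_{I+1/2}, x_{I+1}, …, x_J, x_{J+1/2}`, at indices `I, …, J + 1`. -/
noncomputable def coarseNodes (I J : ℕ) (xh : ℕ → ℝ) : ℕ → ℝ :=
  withBoundary I J (xh I) (xc xh) (xh J)

section Geometry

variable {J I : ℕ} {xh : ℕ → ℝ}

theorem hw_pos (hxmono : ∀ j < J, xh j < xh (j + 1)) {j : ℕ} (hj : j ∈ Icc 1 J) :
    0 < hw xh j := by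
  obtain ⟨h1, hJ⟩ := mem_Icc.mp hj
  have := hxmono (j - 1) (by omega)
  rw [Nat.sub_add_cancel h1] at this
  exact sub_pos.mpr this

theorem withBoundary_xc_lt_succ (hxmono : ∀ j < J, xh j < xh (j + 1)) {a b : ℕ}
    (hab : a < b) (hbJ : b ≤ J) {j : ℕ} (hj : j ∈ Icc a b) :
    withBoundary a b (xh a) (xc xh) (xh b) j < withBoundary a b (xh a) (xc xh) (xh b) (j + 1) := by
  have hpred : ∀ i, 0 < i → i ≤ J → xh (i - 1) < xh i := fun i hi hiJ => by
    simpa [Nat.sub_add_cancel hi] using hxmono (i - 1) (by omega)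
  obtain ⟨haj, hjb⟩ := mem_Icc.mp hj
  rcases (by omega : j = a ∨ a < j ∧ j < b ∨ j = b) with rfl | ⟨haj', hjb'⟩ | rfl
  · simp only [withBoundary, xc, le_refl, if_true, show ¬j + 1 ≤ j by omega, if_false,
      show j + 1 ≤ b by omega, Nat.add_sub_cancel]
    linarith [hxmono j (by omega)]
  · simp only [withBoundary, xc, show ¬j ≤ a by omega, show ¬j + 1 ≤ a by omega, if_false,
      show j ≤ b by omega, show j + 1 ≤ b by omega, if_true, Nat.add_sub_cancel]
    linarith [hxmono j (by omega), hpred j (by omega) (by omega)]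
  · simp only [withBoundary, xc, show ¬j ≤ a by omega, show ¬j + 1 ≤ a by omega,
      show ¬j + 1 ≤ j by omega, if_false, le_refl, if_true]
    linarith [hpred j (by omega) hbJ]

theorem fineNodes_lt_succ (hxmono : ∀ j < J, xh j < xh (j + 1)) (hI1 : 1 ≤ I) (hIJ : I ≤ J)
    {j : ℕ} (hj : j ∈ Icc 0 I) : fineNodes I xh j < fineNodes I xh (j + 1) :=
  withBoundary_xc_lt_succ hxmono hI1 hIJ hj

theorem coarseNodes_lt_succ (hxmono : ∀ j < J, xh j < xh (j + 1)) (hIJ : I < J)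
    {j : ℕ} (hj : j ∈ Icc I J) : coarseNodes I J xh j < coarseNodes I J xh (j + 1) :=
  withBoundary_xc_lt_succ hxmono hIJ le_rfl hj

end Geometry

theorem uF_eq_slope {I : ℕ} (hI1 : 1 ≤ I) (xh : ℕ → ℝ) (p1 : ℕ → ℕ → ℕ → ℝ) (q1 : ℕ → ℕ → ℝ)
    {n k j : ℕ} (hj : j ≤ I) :
    uF I xh p1 q1 n k j
      = (withBoundary 0 I 0 (p1 n k) (q1 n k) (j + 1) - withBoundary 0 I 0 (p1 n k) (q1 n k) j)
        / (fineNodes I xh (j + 1) - fineNodes I xh j) := by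
  rcases (by omega : j = 0 ∨ 0 < j ∧ j < I ∨ j = I) with rfl | ⟨hj0, hjI⟩ | rfl
  · simp [uF, withBoundary, fineNodes, hI1]
  · simp [uF, withBoundary, fineNodes, hjI, hj0.ne', hjI.le, Nat.succ_le_of_lt hjI]
  · simp [uF, withBoundary, fineNodes, Nat.one_le_iff_ne_zero.mp hI1]

theorem uC_eq_slope {I J : ℕ} (hIJ : I < J) (xh : ℕ → ℝ) (p2 : ℕ → ℕ → ℝ) (q2 : ℕ → ℝ)
    {n j : ℕ} (hIj : I ≤ j) (hjJ : j ≤ J) :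
    uC I J xh p2 q2 n j
      = (withBoundary I J (q2 n) (p2 n) 0 (j + 1) - withBoundary I J (q2 n) (p2 n) 0 j)
        / (coarseNodes I J xh (j + 1) - coarseNodes I J xh j) := by
  rcases (by omega : j = I ∨ I < j ∧ j < J ∨ j = J) with rfl | ⟨hIj', hjJ'⟩ | rfl
  · simp [uC, withBoundary, coarseNodes, hIJ.ne, Nat.succ_le_of_lt hIJ]
  · simp [uC, withBoundary, coarseNodes, hjJ'.ne, hIj', hjJ'.le, Nat.succ_le_of_lt hjJ',
      not_le.mpr hIj', not_le.mpr (Nat.lt_succ_of_lt hIj')]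
  · simp [uC, withBoundary, coarseNodes, not_le.mpr hIJ, not_lt.mpr hIJ.le, neg_div]

section Energy

variable {J I K N2 : ℕ} {δt1 δt2 : ℝ} {xh : ℕ → ℝ} {p0 : ℕ → ℝ} {p1 : ℕ → ℕ → ℕ → ℝ}
  {p2 : ℕ → ℕ → ℝ} {q1 : ℕ → ℕ → ℝ} {q2 : ℕ → ℝ} {n : ℕ}

theorem fine_energy_eq (hxmono : ∀ j < J, xh j < xh (j + 1)) (hI1 : 1 ≤ I) (hIJ : I ≤ J)
    (hδt1 : δt1 ≠ 0) {k : ℕ} {r : ℕ → ℝ}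
    (h : ∀ j ∈ Icc 1 I, (hw xh j / δt1) * (p1 n k j - r j)
      - (uF I xh p1 q1 n k j - uF I xh p1 q1 n k (j - 1)) = 0) :
    ∑ j ∈ Icc 1 I, hw xh j * (p1 n k j - r j) * p1 n k j
      = δt1 * (uF I xh p1 q1 n k I * q1 n k - ∑ j ∈ Icc 0 I,
          (fineNodes I xh (j + 1) - fineNodes I xh j) * uF I xh p1 q1 n k j ^ 2) := by
  set pe := withBoundary 0 I 0 (p1 n k) (q1 n k)
  have green := sum_Icc_flux_sub_mul (Nat.zero_le I) (x := fineNodes I xh) (p := pe)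
    (fun j hj => (fineNodes_lt_succ hxmono hI1 hIJ hj).ne)
    (fun j hj => uF_eq_slope hI1 xh p1 q1 (mem_Icc.mp hj).2)
  have hpe : ∀ j ∈ Icc 1 I, pe j = p1 n k j := fun j hj => by
    obtain ⟨h1, hI⟩ := mem_Icc.mp hj
    simp [pe, withBoundary, hI, Nat.one_le_iff_ne_zero.mp h1]
  calc ∑ j ∈ Icc 1 I, hw xh j * (p1 n k j - r j) * p1 n k j
      = ∑ j ∈ Icc (0 + 1) I, δt1 * ((uF I xh p1 q1 n k j - uF I xh p1 q1 n k (j - 1)) * pe j) :=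
        sum_congr rfl fun j hj => by
          rw [hpe j hj]
          have := h j hj
          field_simp at this ⊢
          linear_combination p1 n k j * this
    _ = _ := by
      have hI : pe (I + 1) = q1 n k := by simp [pe, withBoundary]
      have h0 : pe 0 = 0 := by simp [pe, withBoundary]
      rw [← mul_sum, green, hI, h0]
      ring

theorem coarse_energy_eq (hxmono : ∀ j < J, xh j < xh (j + 1)) (hIJ : I < J)
    (hδt2 : δt2 ≠ 0) {r : ℕ → ℝ}
    (h : ∀ j ∈ Icc (I + 1) J, (hw xh j / δt2) * (p2 n j - r j)
      - (uC I J xh p2 q2 n j - uC I J xh p2 q2 n (j - 1)) = 0) :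
    ∑ j ∈ Icc (I + 1) J, hw xh j * (p2 n j - r j) * p2 n j
      = -δt2 * (uC I J xh p2 q2 n I * q2 n + ∑ j ∈ Icc I J,
          (coarseNodes I J xh (j + 1) - coarseNodes I J xh j) * uC I J xh p2 q2 n j ^ 2) := by
  set pe := withBoundary I J (q2 n) (p2 n) 0
  have green := sum_Icc_flux_sub_mul hIJ.le (x := coarseNodes I J xh) (p := pe)
    (fun j hj => (coarseNodes_lt_succ hxmono hIJ hj).ne)
    (fun j hj => uC_eq_slope hIJ xh p2 q2 (mem_Icc.mp hj).1 (mem_Icc.mp hj).2)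
  have hpe : ∀ j ∈ Icc (I + 1) J, pe j = p2 n j := fun j hj => by
    obtain ⟨h1, hJ⟩ := mem_Icc.mp hj
    simp [pe, withBoundary, hJ, not_le.mpr (Nat.lt_of_succ_le h1)]
  calc ∑ j ∈ Icc (I + 1) J, hw xh j * (p2 n j - r j) * p2 n j
      = ∑ j ∈ Icc (I + 1) J, δt2 * ((uC I J xh p2 q2 n j - uC I J xh p2 q2 n (j - 1)) * pe j) :=
        sum_congr rfl fun j hj => by
          rw [hpe j hj]
          have := h j hj
          field_simp at this ⊢
          linear_combination p2 n j * this
    _ = _ := by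
      have hJ : pe (J + 1) = 0 := by simp [pe, withBoundary, not_lt.mpr hIJ.le]
      have hI : pe I = q2 n := by simp [pe, withBoundary]
      rw [← mul_sum, green, hJ, hI]
      ring

theorem fine_time_energy_nonneg (hxmono : ∀ j < J, xh j < xh (j + 1)) (hIJ : I ≤ J)
    (hprev : ∀ j ∈ Icc 1 I, prevF K p0 p1 n 1 j = 0) :
    0 ≤ ∑ k ∈ Icc 1 K, ∑ j ∈ Icc 1 I, hw xh j * (p1 n k j - prevF K p0 p1 n k j) * p1 n k j := by
  rw [sum_comm]
  refine sum_nonneg fun j hj => ?_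
  set a : ℕ → ℝ := fun k => if k = 0 then 0 else p1 n k j
  have ha : ∀ k ∈ Icc 1 K, p1 n k j - prevF K p0 p1 n k j = a k - a (k - 1) := fun k hk => by
    obtain ⟨h1, -⟩ := mem_Icc.mp hk
    rcases eq_or_lt_of_le h1 with rfl | h1
    · simp [a, hprev j hj]
    · have hk0 : k ≠ 0 := by omega
      have hk1 : k - 1 ≠ 0 := by omega
      simp [a, prevF, h1.ne', hk0, hk1]
  have hsum : ∑ k ∈ Icc 1 K, hw xh j * (p1 n k j - prevF K p0 p1 n k j) * p1 n k j
      = hw xh j * ∑ k ∈ Icc 1 K, (a k - a (k - 1)) * a k := by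
    rw [mul_sum]
    refine sum_congr rfl fun k hk => ?_
    have hk0 : k ≠ 0 := by have := (mem_Icc.mp hk).1; omega
    rw [← ha k hk]
    simp only [a, hk0, if_false]
    ring
  rw [hsum]
  obtain ⟨h1j, hjI⟩ := mem_Icc.mp hj
  refine mul_nonneg (hw_pos hxmono (mem_Icc.mpr ⟨h1j, hjI.trans hIJ⟩)).le ?_
  nlinarith [sq_sub_sq_le_two_mul_sum_Icc_sub_pred_mul a K, sq_nonneg (a K),
    show a 0 = 0 from if_pos rfl]

theorem dissipation_eq_zero_at_step (hxmono : ∀ j < J, xh j < xh (j + 1)) (hI1 : 1 ≤ I)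
    (hIJ : I < J) (hδt1 : 0 < δt1) (hδt2 : 0 < δt2)
    (hS : SchemeEqs J I K N2 δt1 δt2 xh p0 0 0 p1 p2 q1 q2)
    (hF : InterfaceFineFlux J I K N2 δt1 δt2 xh p1 p2 q1 q2) (hn : n ∈ Icc 1 N2)
    (hprevF : ∀ j ∈ Icc 1 I, prevF K p0 p1 n 1 j = 0)
    (hprevC : ∀ j ∈ Icc (I + 1) J, prevC p0 p2 n j = 0) :
    (∀ k ∈ Icc 1 K, ∑ j ∈ Icc 0 I,
        (fineNodes I xh (j + 1) - fineNodes I xh j) * uF I xh p1 q1 n k j ^ 2 = 0)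
    ∧ ∑ j ∈ Icc I J,
        (coarseNodes I J xh (j + 1) - coarseNodes I J xh j) * uC I J xh p2 q2 n j ^ 2 = 0 := by
  set DF := fun k => ∑ j ∈ Icc 0 I,
    (fineNodes I xh (j + 1) - fineNodes I xh j) * uF I xh p1 q1 n k j ^ 2
  set DC := ∑ j ∈ Icc I J,
    (coarseNodes I J xh (j + 1) - coarseNodes I J xh j) * uC I J xh p2 q2 n j ^ 2
  have hDF : ∀ k, 0 ≤ DF k := fun k => sum_nonneg fun j hj =>
    mul_nonneg (sub_pos.mpr (fineNodes_lt_succ hxmono hI1 hIJ.le hj)).le (sq_nonneg _)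
  have hDC : 0 ≤ DC := sum_nonneg fun j hj =>
    mul_nonneg (sub_pos.mpr (coarseNodes_lt_succ hxmono hIJ hj)).le (sq_nonneg _)
  have hfine : ∀ k ∈ Icc 1 K,
      ∑ j ∈ Icc 1 I, hw xh j * (p1 n k j - prevF K p0 p1 n k j) * p1 n k j
        = δt1 * (uF I xh p1 q1 n k I * q1 n k - DF k) := fun k hk =>
    fine_energy_eq hxmono hI1 hIJ.le hδt1.ne' fun j hj => by simpa using hS.1 n hn k hk j hj
  have hcoarse : ∑ j ∈ Icc (I + 1) J, hw xh j * (p2 n j - prevC p0 p2 n j) * p2 n j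
      = -δt2 * (uC I J xh p2 q2 n I * q2 n + DC) :=
    coarse_energy_eq hxmono hIJ hδt2.ne' fun j hj => by simpa using hS.2 n hn j hj
  have hinterface : ∑ k ∈ Icc 1 K, δt1 * (uF I xh p1 q1 n k I * q1 n k)
      = δt2 * (uC I J xh p2 q2 n I * q2 n) := by
    rw [mul_left_comm, (hF n hn).2, mul_sum]
    exact sum_congr rfl fun k hk => by rw [(hF n hn).1 k hk]; ring
  have htime := fine_time_energy_nonneg hxmono hIJ.le hprevF
  have hspace : 0 ≤ ∑ j ∈ Icc (I + 1) J, hw xh j * (p2 n j - prevC p0 p2 n j) * p2 n j :=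
    sum_nonneg fun j hj => by
      rw [hprevC j hj, sub_zero, mul_assoc, ← sq]
      obtain ⟨hIj, hjJ⟩ := mem_Icc.mp hj
      exact mul_nonneg (hw_pos hxmono (mem_Icc.mpr ⟨by omega, hjJ⟩)).le (sq_nonneg _)
  rw [sum_congr rfl hfine] at htime
  simp only [mul_sub, sum_sub_distrib, ← mul_sum, hinterface] at htime
  have hsum : δt1 * ∑ k ∈ Icc 1 K, DF k + δt2 * DC ≤ 0 := by linarith
  have hDF_sum := sum_nonneg fun k (_ : k ∈ Icc 1 K) => hDF k
  have h1 : ∑ k ∈ Icc 1 K, DF k = 0 := by nlinarith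
  exact ⟨(sum_eq_zero_iff_of_nonneg fun k _ => hDF k).mp h1, by nlinarith⟩

theorem eq_zero_at_step_of_homogeneous (hxmono : ∀ j < J, xh j < xh (j + 1)) (hI1 : 1 ≤ I)
    (hIJ : I < J) (hδt1 : 0 < δt1) (hδt2 : 0 < δt2)
    (hS : SchemeEqs J I K N2 δt1 δt2 xh p0 0 0 p1 p2 q1 q2)
    (hF : InterfaceFineFlux J I K N2 δt1 δt2 xh p1 p2 q1 q2) (hn : n ∈ Icc 1 N2)
    (hprevF : ∀ j ∈ Icc 1 I, prevF K p0 p1 n 1 j = 0)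
    (hprevC : ∀ j ∈ Icc (I + 1) J, prevC p0 p2 n j = 0) :
    (∀ k ∈ Icc 1 K, (∀ j ∈ Icc 1 I, p1 n k j = 0) ∧ q1 n k = 0)
    ∧ (∀ j ∈ Icc (I + 1) J, p2 n j = 0) ∧ q2 n = 0 := by
  obtain ⟨hDF, hDC⟩ :=
    dissipation_eq_zero_at_step hxmono hI1 hIJ hδt1 hδt2 hS hF hn hprevF hprevC
  have hfine : ∀ k ∈ Icc 1 K, ∀ j ∈ Icc 0 (I + 1), withBoundary 0 I 0 (p1 n k) (q1 n k) j = 0 :=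
    fun k hk j hj => by
      simpa [withBoundary] using eq_of_sum_mul_sq_eq_zero (x := fineNodes I xh)
        (fun j hj => fineNodes_lt_succ hxmono hI1 hIJ.le hj)
        (fun j hj => uF_eq_slope hI1 xh p1 q1 (mem_Icc.mp hj).2) (hDF k hk) j hj
  have hcoarse : ∀ j ∈ Icc I (J + 1), withBoundary I J (q2 n) (p2 n) 0 j = 0 := by
    have hconst := eq_of_sum_mul_sq_eq_zero (x := coarseNodes I J xh)
      (fun j hj => coarseNodes_lt_succ hxmono hIJ hj)
      (fun j hj => uC_eq_slope hIJ xh p2 q2 (mem_Icc.mp hj).1 (mem_Icc.mp hj).2) hDC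
    intro j hj
    rw [hconst j hj, ← hconst (J + 1) (mem_Icc.mpr ⟨by omega, le_rfl⟩)]
    simp [withBoundary, not_lt.mpr hIJ.le]
  refine ⟨fun k hk => ⟨fun j hj => ?_, ?_⟩, fun j hj => ?_, ?_⟩
  · rw [mem_Icc] at hj
    have := hfine k hk j (mem_Icc.mpr ⟨by omega, by omega⟩)
    rwa [withBoundary, if_neg (by omega), if_pos hj.2] at this
  · simpa [withBoundary] using hfine k hk (I + 1) (mem_Icc.mpr ⟨by omega, le_rfl⟩)
  · rw [mem_Icc] at hj
    have := hcoarse j (mem_Icc.mpr ⟨by omega, by omega⟩)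
    rwa [withBoundary, if_neg (by omega), if_pos hj.2] at this
  · simpa [withBoundary] using hcoarse I (mem_Icc.mpr ⟨le_rfl, by omega⟩)

theorem eq_zero_of_homogeneous (hxmono : ∀ j < J, xh j < xh (j + 1)) (hI1 : 1 ≤ I)
    (hIJ : I < J) (hK : 1 ≤ K) (hδt1 : 0 < δt1) (hδt2 : 0 < δt2)
    (hS : SchemeEqs J I K N2 δt1 δt2 xh 0 0 0 p1 p2 q1 q2)
    (hF : InterfaceFineFlux J I K N2 δt1 δt2 xh p1 p2 q1 q2) :
    ∀ n ∈ Icc 1 N2, (∀ k ∈ Icc 1 K, (∀ j ∈ Icc 1 I, p1 n k j = 0) ∧ q1 n k = 0)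
      ∧ (∀ j ∈ Icc (I + 1) J, p2 n j = 0) ∧ q2 n = 0 := by
  intro n hn
  obtain ⟨h1, hN⟩ := mem_Icc.mp hn
  induction n, h1 using Nat.le_induction with
  | base =>
    exact eq_zero_at_step_of_homogeneous hxmono hI1 hIJ hδt1 hδt2 hS hF hn
      (fun j _ => by simp [prevF]) fun j _ => by simp [prevC]
  | succ n h1 ih =>
    have hprev := ih (mem_Icc.mpr ⟨h1, by omega⟩) (by omega)
    have hn1 : n ≠ 0 := by omega
    refine eq_zero_at_step_of_homogeneous hxmono hI1 hIJ hδt1 hδt2 hS hF hn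
      (fun j hj => ?_) fun j hj => ?_
    · simpa [prevF, hn1] using (hprev.1 K (mem_Icc.mpr ⟨hK, le_rfl⟩)).1 j hj
    · simpa [prevC, hn1] using hprev.2.1 j hj

end Energy

section LinearSystem

variable (J I K N2 : ℕ) (δt1 δt2 : ℝ) (xh : ℕ → ℝ)

/-- Indexes the equations as well as the unknowns, which makes the scheme a square system: the
fine equation `(n, k, j)` goes with `p_j^{n,k}`, the coarse equation `(n, j)` with `p_j^n`, the
flux matching `(n, k)` with `p_{I+1/2}^{n,k}` and the pressure matching `n` with `p_{I+1/2}^n`. -/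
abbrev SchemeIndex : Type :=
  ↥(Icc 1 N2 ×ˢ Icc 1 K ×ˢ Icc 1 I) ⊕ ↥(Icc 1 N2 ×ˢ Icc (I + 1) J)
    ⊕ ↥(Icc 1 N2 ×ˢ Icc 1 K) ⊕ ↥(Icc 1 N2)

noncomputable def schemeResidual (p0 : ℕ → ℝ) (f1 : ℕ → ℕ → ℕ → ℝ) (f2 : ℕ → ℕ → ℝ)
    (p1 : ℕ → ℕ → ℕ → ℝ) (p2 : ℕ → ℕ → ℝ) (q1 : ℕ → ℕ → ℝ) (q2 : ℕ → ℝ) :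
    SchemeIndex J I K N2 → ℝ
  | .inl ⟨(n, k, j), _⟩ => (hw xh j / δt1) * (p1 n k j - prevF K p0 p1 n k j)
      - (uF I xh p1 q1 n k j - uF I xh p1 q1 n k (j - 1)) - hw xh j * f1 n k j
  | .inr (.inl ⟨(n, j), _⟩) => (hw xh j / δt2) * (p2 n j - prevC p0 p2 n j)
      - (uC I J xh p2 q2 n j - uC I J xh p2 q2 n (j - 1)) - hw xh j * f2 n j
  | .inr (.inr (.inl ⟨(n, k), _⟩)) => uF I xh p1 q1 n k I - uC I J xh p2 q2 n I
  | .inr (.inr (.inr ⟨n, _⟩)) => δt2 * q2 n - ∑ k ∈ Icc 1 K, δt1 * q1 n k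

variable {J I K N2 δt1 δt2 xh}

theorem schemeResidual_add (p0 p0' : ℕ → ℝ) (f1 f1' : ℕ → ℕ → ℕ → ℝ) (f2 f2' : ℕ → ℕ → ℝ)
    (p1 p1' : ℕ → ℕ → ℕ → ℝ) (p2 p2' : ℕ → ℕ → ℝ) (q1 q1' : ℕ → ℕ → ℝ) (q2 q2' : ℕ → ℝ) :
    schemeResidual J I K N2 δt1 δt2 xh (p0 + p0') (f1 + f1') (f2 + f2') (p1 + p1') (p2 + p2')
        (q1 + q1') (q2 + q2')
      = schemeResidual J I K N2 δt1 δt2 xh p0 f1 f2 p1 p2 q1 q2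
        + schemeResidual J I K N2 δt1 δt2 xh p0' f1' f2' p1' p2' q1' q2' := by
  funext i
  rcases i with ⟨⟨n, k, j⟩, -⟩ | ⟨⟨n, j⟩, -⟩ | ⟨⟨n, k⟩, -⟩ | ⟨n, -⟩ <;>
    simp only [schemeResidual, uF, uC, prevF, prevC, Pi.add_apply, mul_add, sum_add_distrib] <;>
    (try split_ifs) <;> ring

theorem schemeResidual_smul (c : ℝ) (p0 : ℕ → ℝ) (f1 : ℕ → ℕ → ℕ → ℝ) (f2 : ℕ → ℕ → ℝ)
    (p1 : ℕ → ℕ → ℕ → ℝ) (p2 : ℕ → ℕ → ℝ) (q1 : ℕ → ℕ → ℝ) (q2 : ℕ → ℝ) :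
    schemeResidual J I K N2 δt1 δt2 xh (c • p0) (c • f1) (c • f2) (c • p1) (c • p2) (c • q1)
        (c • q2)
      = c • schemeResidual J I K N2 δt1 δt2 xh p0 f1 f2 p1 p2 q1 q2 := by
  funext i
  rcases i with ⟨⟨n, k, j⟩, -⟩ | ⟨⟨n, j⟩, -⟩ | ⟨⟨n, k⟩, -⟩ | ⟨n, -⟩ <;>
    simp only [schemeResidual, uF, uC, prevF, prevC, Pi.smul_apply, smul_eq_mul, mul_sub, mul_sum,
      mul_left_comm δt1 c] <;>
    (try split_ifs) <;> ring

theorem schemeResidual_eq_zero_iff {p0 : ℕ → ℝ} {f1 : ℕ → ℕ → ℕ → ℝ} {f2 : ℕ → ℕ → ℝ}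
    {p1 : ℕ → ℕ → ℕ → ℝ} {p2 : ℕ → ℕ → ℝ} {q1 : ℕ → ℕ → ℝ} {q2 : ℕ → ℝ} :
    schemeResidual J I K N2 δt1 δt2 xh p0 f1 f2 p1 p2 q1 q2 = 0
      ↔ SchemeEqs J I K N2 δt1 δt2 xh p0 f1 f2 p1 p2 q1 q2
        ∧ InterfaceFineFlux J I K N2 δt1 δt2 xh p1 p2 q1 q2 := by
  constructor
  · intro h
    refine ⟨⟨fun n hn k hk j hj => ?_, fun n hn j hj => ?_⟩, fun n hn => ⟨fun k hk => ?_, ?_⟩⟩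
    · exact sub_eq_zero.mp
        (congrFun h (.inl ⟨(n, k, j), mem_product.mpr ⟨hn, mem_product.mpr ⟨hk, hj⟩⟩⟩))
    · exact sub_eq_zero.mp (congrFun h (.inr (.inl ⟨(n, j), mem_product.mpr ⟨hn, hj⟩⟩)))
    · exact sub_eq_zero.mp (congrFun h (.inr (.inr (.inl ⟨(n, k), mem_product.mpr ⟨hn, hk⟩⟩))))
    · exact sub_eq_zero.mp (congrFun h (.inr (.inr (.inr ⟨n, hn⟩))))
  · rintro ⟨⟨h1, h2⟩, h3⟩
    funext i
    rcases i with ⟨⟨n, k, j⟩, hi⟩ | ⟨⟨n, j⟩, hi⟩ | ⟨⟨n, k⟩, hi⟩ | ⟨n, hi⟩ <;>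
      (try simp only [mem_product] at hi) <;>
      simp only [schemeResidual, Pi.zero_apply, sub_eq_zero]
    · exact h1 n hi.1 k hi.2.1 j hi.2.2
    · exact h2 n hi.1 j hi.2
    · exact (h3 n hi.1).1 k hi.2
    · exact (h3 n hi).2

theorem schemeResidual_eq_add (p0 : ℕ → ℝ) (f1 : ℕ → ℕ → ℕ → ℝ) (f2 : ℕ → ℕ → ℝ)
    (p1 : ℕ → ℕ → ℕ → ℝ) (p2 : ℕ → ℕ → ℝ) (q1 : ℕ → ℕ → ℝ) (q2 : ℕ → ℝ) :
    schemeResidual J I K N2 δt1 δt2 xh p0 f1 f2 p1 p2 q1 q2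
      = schemeResidual J I K N2 δt1 δt2 xh p0 f1 f2 0 0 0 0
        + schemeResidual J I K N2 δt1 δt2 xh 0 0 0 p1 p2 q1 q2 := by
  rw [← schemeResidual_add]
  simp only [add_zero, zero_add]

abbrev SchemeNode : Type := (ℕ × ℕ × ℕ) ⊕ (ℕ × ℕ) ⊕ (ℕ × ℕ) ⊕ ℕ

def SchemeIndex.toNode : SchemeIndex J I K N2 → SchemeNode :=
  Sum.map Subtype.val (Sum.map Subtype.val (Sum.map Subtype.val Subtype.val))

theorem SchemeIndex.toNode_injective :
    Function.Injective (toNode (J := J) (I := I) (K := K) (N2 := N2)) :=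
  Subtype.val_injective.sumMap <|
    Subtype.val_injective.sumMap <| Subtype.val_injective.sumMap Subtype.val_injective

variable (J I K N2 δt1 δt2 xh) in
noncomputable def schemeOperator :
    (SchemeIndex J I K N2 → ℝ) →ₗ[ℝ] (SchemeIndex J I K N2 → ℝ) where
  toFun x :=
    let w := Function.ExtendByZero.linearMap ℝ SchemeIndex.toNode x
    schemeResidual J I K N2 δt1 δt2 xh 0 0 0 (fun n k j => w (.inl (n, k, j)))
      (fun n j => w (.inr (.inl (n, j)))) (fun n k => w (.inr (.inr (.inl (n, k)))))
      (fun n => w (.inr (.inr (.inr n))))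
  map_add' x y := by
    refine Eq.trans ?_ (schemeResidual_add 0 0 0 0 0 0 _ _ _ _ _ _ _ _)
    simp only [add_zero, map_add, Pi.add_apply]
    rfl
  map_smul' c x := by
    refine Eq.trans ?_ (schemeResidual_smul c 0 0 0 _ _ _ _)
    simp only [smul_zero, map_smul, Pi.smul_apply]
    rfl

theorem schemeOperator_injective (hxmono : ∀ j < J, xh j < xh (j + 1)) (hI1 : 1 ≤ I)
    (hIJ : I < J) (hK : 1 ≤ K) (hδt1 : 0 < δt1) (hδt2 : 0 < δt2) :
    Function.Injective (schemeOperator J I K N2 δt1 δt2 xh) := by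
  refine (injective_iff_map_eq_zero _).mpr fun x hx => ?_
  obtain ⟨hS, hF⟩ := schemeResidual_eq_zero_iff.mp hx
  have h0 := eq_zero_of_homogeneous hxmono hI1 hIJ hK hδt1 hδt2 hS hF
  funext i
  rw [Pi.zero_apply, ← SchemeIndex.toNode_injective.extend_apply x 0 i]
  rcases i with ⟨⟨n, k, j⟩, hi⟩ | ⟨⟨n, j⟩, hi⟩ | ⟨⟨n, k⟩, hi⟩ | ⟨n, hi⟩ <;>
    (try simp only [mem_product] at hi)
  · exact ((h0 n hi.1).1 k hi.2.1).1 j hi.2.2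
  · exact (h0 n hi.1).2.1 j hi.2
  · exact ((h0 n hi.1).1 k hi.2).2
  · exact (h0 n hi).2.2

theorem exists_schemeEqs (hxmono : ∀ j < J, xh j < xh (j + 1)) (hI1 : 1 ≤ I)
    (hIJ : I < J) (hK : 1 ≤ K) (hδt1 : 0 < δt1) (hδt2 : 0 < δt2)
    (p0 : ℕ → ℝ) (f1 : ℕ → ℕ → ℕ → ℝ) (f2 : ℕ → ℕ → ℝ) :
    ∃ p1 p2 q1 q2, SchemeEqs J I K N2 δt1 δt2 xh p0 f1 f2 p1 p2 q1 q2
      ∧ InterfaceFineFlux J I K N2 δt1 δt2 xh p1 p2 q1 q2 := by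
  obtain ⟨x, hx⟩ := LinearMap.injective_iff_surjective.mp
    (schemeOperator_injective hxmono hI1 hIJ hK hδt1 hδt2 (N2 := N2))
    (-schemeResidual J I K N2 δt1 δt2 xh p0 f1 f2 0 0 0 0)
  set w := Function.ExtendByZero.linearMap ℝ SchemeIndex.toNode x
  refine ⟨fun n k j => w (.inl (n, k, j)), fun n j => w (.inr (.inl (n, j))),
    fun n k => w (.inr (.inr (.inl (n, k)))), fun n => w (.inr (.inr (.inr n))),
    schemeResidual_eq_zero_iff.mp ?_⟩
  rw [schemeResidual_eq_add]
  change _ + schemeOperator J I K N2 δt1 δt2 xh x = 0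
  rw [hx, add_neg_cancel]

theorem schemeEqs_sub {p0 : ℕ → ℝ} {f1 : ℕ → ℕ → ℕ → ℝ} {f2 : ℕ → ℕ → ℝ}
    {p1 p1' : ℕ → ℕ → ℕ → ℝ} {p2 p2' : ℕ → ℕ → ℝ} {q1 q1' : ℕ → ℕ → ℝ} {q2 q2' : ℕ → ℝ}
    (hS : SchemeEqs J I K N2 δt1 δt2 xh p0 f1 f2 p1 p2 q1 q2)
    (hF : InterfaceFineFlux J I K N2 δt1 δt2 xh p1 p2 q1 q2)
    (hS' : SchemeEqs J I K N2 δt1 δt2 xh p0 f1 f2 p1' p2' q1' q2')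
    (hF' : InterfaceFineFlux J I K N2 δt1 δt2 xh p1' p2' q1' q2') :
    SchemeEqs J I K N2 δt1 δt2 xh 0 0 0 (p1 - p1') (p2 - p2') (q1 - q1') (q2 - q2')
      ∧ InterfaceFineFlux J I K N2 δt1 δt2 xh (p1 - p1') (p2 - p2') (q1 - q1') (q2 - q2') := by
  have := schemeResidual_add (J := J) (I := I) (K := K) (N2 := N2) (δt1 := δt1) (δt2 := δt2)
    (xh := xh) p0 0 f1 0 f2 0 p1' (p1 - p1') p2' (p2 - p2') q1' (q1 - q1') q2' (q2 - q2')
  simp only [add_zero, add_sub_cancel, schemeResidual_eq_zero_iff.mpr ⟨hS, hF⟩,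
    schemeResidual_eq_zero_iff.mpr ⟨hS', hF'⟩, zero_add] at this
  exact schemeResidual_eq_zero_iff.mp this.symm

end LinearSystem

theorem wellposed_interface_unknowns_fine_flux_general
    (J I K N2 : ℕ) (hI1 : 1 ≤ I) (hIJ : I < J) (hK : 1 ≤ K)
    (δt1 : ℝ) (hδt1 : 0 < δt1) (δt2 : ℝ) (hδt2 : δt2 = (K : ℝ) * δt1)
    (xh : ℕ → ℝ) (hxmono : ∀ j < J, xh j < xh (j + 1))
    (p0 : ℕ → ℝ) (f1 : ℕ → ℕ → ℕ → ℝ) (f2 : ℕ → ℕ → ℝ) :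
    (∃ p1 p2 q1 q2,
        SchemeEqs J I K N2 δt1 δt2 xh p0 f1 f2 p1 p2 q1 q2
        ∧ InterfaceFineFlux J I K N2 δt1 δt2 xh p1 p2 q1 q2)
    ∧ ∀ p1 p2 q1 q2 p1' p2' q1' q2',
        SchemeEqs J I K N2 δt1 δt2 xh p0 f1 f2 p1 p2 q1 q2 →
        InterfaceFineFlux J I K N2 δt1 δt2 xh p1 p2 q1 q2 →
        SchemeEqs J I K N2 δt1 δt2 xh p0 f1 f2 p1' p2' q1' q2' →
        InterfaceFineFlux J I K N2 δt1 δt2 xh p1' p2' q1' q2' →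
        ∀ n ∈ Icc 1 N2,
          (∀ k ∈ Icc 1 K, (∀ j ∈ Icc 1 I, p1 n k j = p1' n k j) ∧ q1 n k = q1' n k)
          ∧ (∀ j ∈ Icc (I + 1) J, p2 n j = p2' n j) ∧ q2 n = q2' n := by
  have hδt2pos : 0 < δt2 := hδt2 ▸ mul_pos (Nat.cast_pos.mpr hK) hδt1
  refine ⟨exists_schemeEqs hxmono hI1 hIJ hK hδt1 hδt2pos p0 f1 f2, ?_⟩
  intro p1 p2 q1 q2 p1' p2' q1' q2' hS hF hS' hF' n hn
  obtain ⟨hS0, hF0⟩ := schemeEqs_sub hS hF hS' hF'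
  simpa [sub_eq_zero] using eq_zero_of_homogeneous hxmono hI1 hIJ hK hδt1 hδt2pos hS0 hF0 n hn

/-- Well-posedness with interface unknowns and fine-flux/coarse-pressure matching:
for every choice of sources and initial values, the resulting finite linear system has
exactly one solution `(p_j^{n,k}` for `j ≤ I`, `p_j^{n}` for `j > I`, `p_{I+1/2}^{n,k}`,
`p_{I+1/2}^{n})`. -/
theorem wellposed_interface_unknowns_fine_flux
    (J I K N2 : ℕ) (hJ : 3 ≤ J) (hI1 : 1 ≤ I) (hIJ : I < J) (hK : 1 ≤ K) (hN2 : 1 ≤ N2)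
    (δt1 : ℝ) (hδt1 : 0 < δt1) (δt2 : ℝ) (hδt2 : δt2 = (K : ℝ) * δt1)
    (xh : ℕ → ℝ) (hx0 : xh 0 = 0) (hxmono : ∀ j < J, xh j < xh (j + 1))
    (p0 : ℕ → ℝ) (f1 : ℕ → ℕ → ℕ → ℝ) (f2 : ℕ → ℕ → ℝ) :
    (∃ p1 p2 q1 q2,
        SchemeEqs J I K N2 δt1 δt2 xh p0 f1 f2 p1 p2 q1 q2
        ∧ InterfaceFineFlux J I K N2 δt1 δt2 xh p1 p2 q1 q2)
    ∧ ∀ p1 p2 q1 q2 p1' p2' q1' q2',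
        SchemeEqs J I K N2 δt1 δt2 xh p0 f1 f2 p1 p2 q1 q2 →
        InterfaceFineFlux J I K N2 δt1 δt2 xh p1 p2 q1 q2 →
        SchemeEqs J I K N2 δt1 δt2 xh p0 f1 f2 p1' p2' q1' q2' →
        InterfaceFineFlux J I K N2 δt1 δt2 xh p1' p2' q1' q2' →
        ∀ n ∈ Icc 1 N2,
          (∀ k ∈ Icc 1 K, (∀ j ∈ Icc 1 I, p1 n k j = p1' n k j) ∧ q1 n k = q1' n k)
          ∧ (∀ j ∈ Icc (I + 1) J, p2 n j = p2' n j) ∧ q2 n = q2' n :=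
  wellposed_interface_unknowns_fine_flux_general J I K N2 hI1 hIJ hK δt1 hδt1 δt2 hδt2 xh hxmono p0
    f1 f2
end

section
/- Unconditional L² stability with interface unknowns and coarse-flux/fine-pressure matching: augment the one-dimensional composite finite volume scheme with additional interface unknowns p_{I+1/2}^{n,k} and p_{I+1/2}^{n}, interface fluxes u_{I+1/2}^{n,k} = (p_{I+1/2}^{n,k} − p_I^{n,k})/(x_{I+1/2} − x_I) and u_{I+1/2}^{n} = (p_{I+1}^{n} − p_{I+1/2}^{n})/(x_{I+1} − x_{I+1/2}), and interface conditions, for every n: δt₂ u_{I+1/2}^{n} = Σ_{k=1}^{𝒦} δt₁ u_{I+1/2}^{n,k} and p_{I+1/2}^{n,k} = p_{I+1/2}^{n} for all k. If all sources vanish (f_j^{n,k} = 0 and f_j^{n} = 0), then every solution satisfies Σ_{j ≤ I} h_j (p_j^{N₂,𝒦})² + Σ_{j > I} h_j (p_j^{N₂})² ≤ Σ_{j=1}^{J} h_j (p_j^{0})², with no restriction on the sizes of δt₁, δt₂ or the cell widths. -/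
open Finset

/-- Interface conditions with interface unknowns and coarse-flux/fine-pressure matching:
`δt₂ u_{I+1/2}^{n} = ∑_{k=1}^{𝒦} δt₁ u_{I+1/2}^{n,k}` and
`p_{I+1/2}^{n,k} = p_{I+1/2}^{n}` for all `k`. -/
def InterfaceCoarseFlux (J I K N2 : ℕ) (δt1 δt2 : ℝ) (xh : ℕ → ℝ)
    (p1 : ℕ → ℕ → ℕ → ℝ) (p2 : ℕ → ℕ → ℝ) (q1 : ℕ → ℕ → ℝ) (q2 : ℕ → ℝ) : Prop :=
  ∀ n ∈ Icc 1 N2,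
    δt2 * uC I J xh p2 q2 n I = ∑ k ∈ Icc 1 K, δt1 * uF I xh p1 q1 n k I
    ∧ ∀ k ∈ Icc 1 K, q1 n k = q2 n


/-!
Energy method. Multiplying the equation of cell `j` by `2 p_j` and using
`2 (a - b) a ≥ a² - b²` bounds the growth of the discrete `L²` energy over one time step by
`2 δt ∑_j (u_{j+1/2} - u_{j-1/2}) p_j`. Summation by parts turns this into boundary terms, since
every two-point flux satisfies `u_{j+1/2} (p_{j+1} - p_j) ≥ 0`; the outer boundary terms have the
right sign, and the interface ones are bounded by `2 δt₁ p_{I+1/2} u_{I+1/2}^{n,k}` for each fine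
step and `-2 δt₂ p_{I+1/2} u_{I+1/2}^n` for the coarse step. As the interface pressure is the
same for all fine steps of a coarse step, the flux matching condition makes these cancel.
-/

lemma sum_Icc_sub_mul_le {u p : ℕ → ℝ} {a b : ℕ} (hab : a ≤ b)
    (hgrad : ∀ j ∈ Ico a b, 0 ≤ u j * (p (j + 1) - p j)) :
    ∑ j ∈ Icc a b, (u j - u (j - 1)) * p j ≤ u b * p b - u (a - 1) * p a := by
  induction b, hab using Nat.le_induction with
  | base => simp [sub_mul]
  | succ b hab ih =>
    rw [sum_Icc_succ_top (by omega), Nat.add_sub_cancel]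
    have hlast := hgrad b (mem_Ico.2 ⟨hab, by omega⟩)
    have hprev := ih fun j hj => hgrad j (Ico_subset_Ico_right (by omega) hj)
    linarith

lemma le_add_sum_Icc_of_le_pred_add {E c : ℕ → ℝ} {K : ℕ}
    (h : ∀ k ∈ Icc 1 K, E k ≤ E (k - 1) + c k) : E K ≤ E 0 + ∑ k ∈ Icc 1 K, c k := by
  induction K with
  | zero => simp
  | succ K ih =>
    rw [sum_Icc_succ_top (by omega)]
    have hlast := h (K + 1) (by simp)
    have hprev := ih fun k hk => h k (Icc_subset_Icc_right (by omega) hk)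
    rw [Nat.add_sub_cancel] at hlast
    linarith

lemma sum_mul_sq_le_of_implicit_step {s : Finset ℕ} {h v w g : ℕ → ℝ} {δt : ℝ} (hδt : δt ≠ 0)
    (hh : ∀ j ∈ s, 0 ≤ h j) (hstep : ∀ j ∈ s, h j / δt * (v j - w j) - g j = 0) :
    ∑ j ∈ s, h j * v j ^ 2 ≤ ∑ j ∈ s, h j * w j ^ 2 + 2 * δt * ∑ j ∈ s, g j * v j := by
  rw [mul_sum, ← sum_add_distrib]
  refine sum_le_sum fun j hj => ?_
  have hflux : h j * (v j - w j) = δt * g j := by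
    have := hstep j hj
    field_simp at this
    linarith
  have hsq := mul_nonneg (hh j hj) (sq_nonneg (v j - w j))
  linear_combination hsq + 2 * v j * hflux

lemma div_mul_self_nonneg {d : ℝ} (hd : 0 ≤ d) (x : ℝ) : 0 ≤ x / d * x := by
  rw [div_mul_eq_mul_div]
  exact div_nonneg (mul_self_nonneg x) hd

section Mesh

variable {xh : ℕ → ℝ} {J : ℕ}

lemma hw_pos_s9 (hx : ∀ j < J, xh j < xh (j + 1)) {j : ℕ} (hj1 : 1 ≤ j) (hjJ : j ≤ J) :
    0 < hw xh j := by
  have := hx (j - 1) (by omega)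
  rw [Nat.sub_add_cancel hj1] at this
  exact sub_pos.2 this

lemma xh_sub_xc (xh : ℕ → ℝ) (j : ℕ) : xh j - xc xh j = hw xh j / 2 := by
  unfold xc hw
  ring

lemma xc_sub_xh_pred (xh : ℕ → ℝ) (j : ℕ) : xc xh j - xh (j - 1) = hw xh j / 2 := by
  unfold xc hw
  ring

lemma xc_succ_sub_xc (xh : ℕ → ℝ) (j : ℕ) :
    xc xh (j + 1) - xc xh j = (hw xh j + hw xh (j + 1)) / 2 := by
  unfold xc hw
  rw [Nat.add_sub_cancel]
  ring

lemma xc_succ_sub_xc_pos (hx : ∀ j < J, xh j < xh (j + 1)) {j : ℕ} (hj1 : 1 ≤ j)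
    (hjJ : j < J) : 0 < xc xh (j + 1) - xc xh j := by
  rw [xc_succ_sub_xc]
  have := hw_pos_s9 hx hj1 hjJ.le
  have := hw_pos_s9 hx (j := j + 1) (by omega) hjJ
  positivity

end Mesh

section Dissipation

variable {I J : ℕ} {xh : ℕ → ℝ} (hx : ∀ j < J, xh j < xh (j + 1))
include hx

lemma sum_Icc_uF_sub_mul_le {p1 : ℕ → ℕ → ℕ → ℝ} {q1 : ℕ → ℕ → ℝ} {n k : ℕ}
    (hI : 1 ≤ I) (hIJ : I < J) :
    ∑ j ∈ Icc 1 I, (uF I xh p1 q1 n k j - uF I xh p1 q1 n k (j - 1)) * p1 n k j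
      ≤ q1 n k * uF I xh p1 q1 n k I := by
  have hgrad : ∀ j ∈ Ico 1 I, 0 ≤ uF I xh p1 q1 n k j * (p1 n k (j + 1) - p1 n k j) := by
    intro j hj
    obtain ⟨hj1, hjI⟩ := mem_Ico.1 hj
    rw [uF, if_neg (by omega), if_pos hjI]
    exact div_mul_self_nonneg (xc_succ_sub_xc_pos hx hj1 (by omega)).le _
  have hleft : 0 ≤ uF I xh p1 q1 n k 0 * p1 n k 1 := by
    rw [uF, if_pos rfl, (xc_sub_xh_pred xh 1 : xc xh 1 - xh 0 = hw xh 1 / 2)]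
    exact div_mul_self_nonneg (by linarith [hw_pos_s9 hx le_rfl (by omega)]) _
  have hright : 0 ≤ uF I xh p1 q1 n k I * (q1 n k - p1 n k I) := by
    rw [uF, if_neg (by omega), if_neg (lt_irrefl I), xh_sub_xc]
    exact div_mul_self_nonneg (by linarith [hw_pos_s9 hx hI hIJ.le]) _
  calc _ ≤ uF I xh p1 q1 n k I * p1 n k I - uF I xh p1 q1 n k 0 * p1 n k 1 :=
        sum_Icc_sub_mul_le hI hgrad
    _ ≤ q1 n k * uF I xh p1 q1 n k I := by linarith

lemma sum_Icc_uC_sub_mul_le {p2 : ℕ → ℕ → ℝ} {q2 : ℕ → ℝ} {n : ℕ} (hIJ : I < J) :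
    ∑ j ∈ Icc (I + 1) J, (uC I J xh p2 q2 n j - uC I J xh p2 q2 n (j - 1)) * p2 n j
      ≤ -(q2 n * uC I J xh p2 q2 n I) := by
  have hgrad : ∀ j ∈ Ico (I + 1) J, 0 ≤ uC I J xh p2 q2 n j * (p2 n (j + 1) - p2 n j) := by
    intro j hj
    obtain ⟨hIj, hjJ⟩ := mem_Ico.1 hj
    rw [uC, if_neg (by omega), if_pos (by omega)]
    exact div_mul_self_nonneg (xc_succ_sub_xc_pos hx (by omega) hjJ).le _
  have hleft : 0 ≤ uC I J xh p2 q2 n I * (p2 n (I + 1) - q2 n) := by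
    rw [uC, if_neg hIJ.ne, if_neg (lt_irrefl I)]
    have hd : xc xh (I + 1) - xh I = hw xh (I + 1) / 2 := xc_sub_xh_pred xh (I + 1)
    rw [hd]
    exact div_mul_self_nonneg (by linarith [hw_pos_s9 hx (j := I + 1) (by omega) hIJ]) _
  have hright : 0 ≤ -(p2 n J) / (xh J - xc xh J) * -(p2 n J) := by
    rw [xh_sub_xc]
    exact div_mul_self_nonneg (by linarith [hw_pos_s9 hx (j := J) (by omega) le_rfl]) _
  have hJ : uC I J xh p2 q2 n J = -(p2 n J) / (xh J - xc xh J) := if_pos rfl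
  calc _ ≤ uC I J xh p2 q2 n J * p2 n J - uC I J xh p2 q2 n (I + 1 - 1) * p2 n (I + 1) :=
        sum_Icc_sub_mul_le (by omega) hgrad
    _ ≤ -(q2 n * uC I J xh p2 q2 n I) := by
      rw [Nat.add_sub_cancel, hJ]
      linarith

end Dissipation

section Energy

variable {J I K N2 : ℕ} {δt1 δt2 : ℝ} {xh : ℕ → ℝ} {p0 : ℕ → ℝ}
  {p1 : ℕ → ℕ → ℕ → ℝ} {p2 : ℕ → ℕ → ℝ} {q1 : ℕ → ℕ → ℝ} {q2 : ℕ → ℝ}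

lemma prevF_succ {n k : ℕ} (hk : k ≠ 0) (j : ℕ) : prevF K p0 p1 n (k + 1) j = p1 n k j := by
  simp [prevF, hk]

lemma prevF_succ_one {n : ℕ} (hn : n ≠ 0) (j : ℕ) : prevF K p0 p1 (n + 1) 1 j = p1 n K j := by
  simp [prevF, hn]

lemma prevC_succ {n : ℕ} (hn : n ≠ 0) (j : ℕ) : prevC p0 p2 (n + 1) j = p2 n j := by
  simp [prevC, hn]

variable (hs : SchemeEqs J I K N2 δt1 δt2 xh p0 (fun _ _ _ => 0) (fun _ _ => 0) p1 p2 q1 q2)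
  (hx : ∀ j < J, xh j < xh (j + 1)) (hIJ : I < J)
include hs hx hIJ

lemma SchemeEqs.fine_energy_le (hI : 1 ≤ I) (hδt1 : 0 < δt1) {n k : ℕ} (hn : n ∈ Icc 1 N2)
    (hk : k ∈ Icc 1 K) :
    ∑ j ∈ Icc 1 I, hw xh j * p1 n k j ^ 2
      ≤ ∑ j ∈ Icc 1 I, hw xh j * prevF K p0 p1 n k j ^ 2
        + 2 * δt1 * (q1 n k * uF I xh p1 q1 n k I) := by
  calc _ ≤ ∑ j ∈ Icc 1 I, hw xh j * prevF K p0 p1 n k j ^ 2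
        + 2 * δt1 * ∑ j ∈ Icc 1 I,
          (uF I xh p1 q1 n k j - uF I xh p1 q1 n k (j - 1)) * p1 n k j :=
        sum_mul_sq_le_of_implicit_step hδt1.ne'
          (fun j hj => (hw_pos_s9 hx (mem_Icc.1 hj).1 (by grind)).le)
          (fun j hj => by simpa using hs.1 n hn k hk j hj)
    _ ≤ _ := by
      have := sum_Icc_uF_sub_mul_le (p1 := p1) (q1 := q1) (n := n) (k := k) hx hI hIJ
      gcongr

lemma SchemeEqs.coarse_energy_le (hδt2 : 0 < δt2) {n : ℕ} (hn : n ∈ Icc 1 N2) :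
    ∑ j ∈ Icc (I + 1) J, hw xh j * p2 n j ^ 2
      ≤ ∑ j ∈ Icc (I + 1) J, hw xh j * prevC p0 p2 n j ^ 2
        - 2 * δt2 * (q2 n * uC I J xh p2 q2 n I) := by
  calc _ ≤ ∑ j ∈ Icc (I + 1) J, hw xh j * prevC p0 p2 n j ^ 2
        + 2 * δt2 * ∑ j ∈ Icc (I + 1) J,
          (uC I J xh p2 q2 n j - uC I J xh p2 q2 n (j - 1)) * p2 n j :=
        sum_mul_sq_le_of_implicit_step hδt2.ne'
          (fun j hj => (hw_pos_s9 hx (by grind) (mem_Icc.1 hj).2).le)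
          (fun j hj => by simpa using hs.2 n hn j hj)
    _ ≤ _ := by
      have := sum_Icc_uC_sub_mul_le (p2 := p2) (q2 := q2) (n := n) hx hIJ
      rw [sub_eq_add_neg, ← mul_neg]
      gcongr

lemma SchemeEqs.energy_le_of_coarse_step (hI : 1 ≤ I)
    (hi : InterfaceCoarseFlux J I K N2 δt1 δt2 xh p1 p2 q1 q2) (hK : 1 ≤ K)
    (hδt1 : 0 < δt1) (hδt2 : 0 < δt2) {n : ℕ} (hn : n ∈ Icc 1 N2) :
    ∑ j ∈ Icc 1 I, hw xh j * p1 n K j ^ 2 + ∑ j ∈ Icc (I + 1) J, hw xh j * p2 n j ^ 2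
      ≤ ∑ j ∈ Icc 1 I, hw xh j * prevF K p0 p1 n 1 j ^ 2
        + ∑ j ∈ Icc (I + 1) J, hw xh j * prevC p0 p2 n j ^ 2 := by
  obtain ⟨hflux, hpress⟩ := hi n hn
  -- `prevF K p0 p1 n (k + 1)` is the fine state after `k` fine steps, also for `k = 0`.
  have hfine := le_add_sum_Icc_of_le_pred_add (K := K)
    (E := fun k => ∑ j ∈ Icc 1 I, hw xh j * prevF K p0 p1 n (k + 1) j ^ 2)
    (c := fun k => 2 * q2 n * (δt1 * uF I xh p1 q1 n k I)) fun k hk => by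
      obtain ⟨hk1, -⟩ := mem_Icc.1 hk
      simp only [prevF_succ (by omega : k ≠ 0), Nat.sub_add_cancel hk1]
      have := hs.fine_energy_le hx hIJ hI hδt1 hn hk
      rw [hpress k hk] at this
      linarith
  simp only [prevF_succ (by omega : K ≠ 0), zero_add, ← mul_sum, ← hflux] at hfine
  have hcoarse := hs.coarse_energy_le hx hIJ hδt2 hn
  linarith

end Energy

theorem stability_interface_unknowns_coarse_flux_general
    (J I K N2 : ℕ) (hI1 : 1 ≤ I) (hIJ : I < J) (hK : 1 ≤ K) (hN2 : 1 ≤ N2)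
    (δt1 : ℝ) (hδt1 : 0 < δt1) (δt2 : ℝ) (hδt2 : δt2 = (K : ℝ) * δt1)
    (xh : ℕ → ℝ) (hxmono : ∀ j < J, xh j < xh (j + 1))
    (p0 : ℕ → ℝ)
    (p1 : ℕ → ℕ → ℕ → ℝ) (p2 : ℕ → ℕ → ℝ) (q1 : ℕ → ℕ → ℝ) (q2 : ℕ → ℝ)
    (hscheme : SchemeEqs J I K N2 δt1 δt2 xh p0 (fun _ _ _ => 0) (fun _ _ => 0) p1 p2 q1 q2)
    (hinterface : InterfaceCoarseFlux J I K N2 δt1 δt2 xh p1 p2 q1 q2) :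
    ∑ j ∈ Icc 1 I, hw xh j * (p1 N2 K j) ^ 2
      + ∑ j ∈ Icc (I + 1) J, hw xh j * (p2 N2 j) ^ 2
      ≤ ∑ j ∈ Icc 1 J, hw xh j * (p0 j) ^ 2 := by
  have hδt2_pos : 0 < δt2 := hδt2 ▸ mul_pos (Nat.cast_pos.2 hK) hδt1
  have htel := le_add_sum_Icc_of_le_pred_add (K := N2) (c := fun _ => 0)
    (E := fun m => ∑ j ∈ Icc 1 I, hw xh j * prevF K p0 p1 (m + 1) 1 j ^ 2
      + ∑ j ∈ Icc (I + 1) J, hw xh j * prevC p0 p2 (m + 1) j ^ 2) fun m hm => by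
    obtain ⟨hm1, -⟩ := mem_Icc.1 hm
    simp only [prevF_succ_one (by omega : m ≠ 0), prevC_succ (by omega : m ≠ 0),
      Nat.sub_add_cancel hm1, add_zero]
    exact hscheme.energy_le_of_coarse_step hxmono hIJ hI1 hinterface hK hδt1 hδt2_pos hm
  simp only [prevF_succ_one (by omega : N2 ≠ 0), prevC_succ (by omega : N2 ≠ 0), zero_add,
    sum_const_zero, add_zero] at htel
  refine htel.trans_eq ?_
  simp only [prevF, prevC, if_true, ← Ico_add_one_right_eq_Icc]
  exact sum_Ico_consecutive _ (by omega) (by omega)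

/-- Unconditional `L²` stability with interface unknowns and coarse-flux/fine-pressure
matching: if all sources vanish, every solution satisfies
`∑_{j ≤ I} h_j (p_j^{N₂,𝒦})² + ∑_{j > I} h_j (p_j^{N₂})² ≤ ∑_{j=1}^{J} h_j (p_j^0)²`,
with no restriction on the sizes of `δt₁`, `δt₂` or the cell widths. -/
theorem stability_interface_unknowns_coarse_flux
    (J I K N2 : ℕ) (hJ : 3 ≤ J) (hI1 : 1 ≤ I) (hIJ : I < J) (hK : 1 ≤ K) (hN2 : 1 ≤ N2)
    (δt1 : ℝ) (hδt1 : 0 < δt1) (δt2 : ℝ) (hδt2 : δt2 = (K : ℝ) * δt1)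
    (xh : ℕ → ℝ) (hx0 : xh 0 = 0) (hxmono : ∀ j < J, xh j < xh (j + 1))
    (p0 : ℕ → ℝ)
    (p1 : ℕ → ℕ → ℕ → ℝ) (p2 : ℕ → ℕ → ℝ) (q1 : ℕ → ℕ → ℝ) (q2 : ℕ → ℝ)
    (hscheme : SchemeEqs J I K N2 δt1 δt2 xh p0 (fun _ _ _ => 0) (fun _ _ => 0) p1 p2 q1 q2)
    (hinterface : InterfaceCoarseFlux J I K N2 δt1 δt2 xh p1 p2 q1 q2) :
    ∑ j ∈ Icc 1 I, hw xh j * (p1 N2 K j) ^ 2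
      + ∑ j ∈ Icc (I + 1) J, hw xh j * (p2 N2 j) ^ 2
      ≤ ∑ j ∈ Icc 1 J, hw xh j * (p0 j) ^ 2 :=
  stability_interface_unknowns_coarse_flux_general J I K N2 hI1 hIJ hK hN2 δt1 hδt1 δt2 hδt2 xh
    hxmono p0 p1 p2 q1 q2 hscheme hinterface
end
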